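/- Let $I\subseteq\{0,\ldots,d\}$ with $d\notin I$. Then $\Diamond^d(\Gamma^d_I)=\rho(\Diamond^d(\Gamma^d_{I+1}))\cup\sigma(\Diamond^d(\Gamma^d_{I+1}))$ with $\rho(\Diamond^d(\Gamma^d_{I+1}))\cap\sigma(\Diamond^d(\Gamma^d_{I+1}))=\Diamond^{d-1}(\Gamma^{d-1}_I)$; moreover $\rho(\Diamond^d(\Gamma^d_{I+1}))$ and $\sigma(\Diamond^d(\Gamma^d_{I+1}))$ are induced subcomplexes of $\Diamond^d(\Gamma^d_I)$. -/

import Mathlib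

/-!
Write `Γ_I^k` for `Γ_I` after the stellar subdivisions at `F_0, …, F_{k-1}`. By induction on `k`,
`F` is a face of `Γ_I^k` iff it uses a new vertex `v_j` only for `j < k`, contains no pair
`{j, v_j}`, misses some `i ∈ I` together with `v_0, …, v_{i-1}`, and misses one of `k, …, d+1`.
So `⋄(Γ_I)` is cut out by three membership conditions. Relabeling by `ρ` shifts them by one index
and turns `⋄(Γ_{I+1})` into the faces of `⋄(Γ_I)` avoiding `v_d`; `σ = ψ ∘ ρ` gives those avoiding
`d`. As no face contains both `d` and `v_d`, the two copies cover `⋄(Γ_I)` and meet in the faces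
avoiding both, which form the lifted `⋄(Γ^{d-1}_I)`; each copy is induced, being cut out by a
single missing vertex.
-/

namespace Paper

/-- Ambient vertex type in dimension `d`: original vertices `0,…,d+1` (left)
and new vertices `v_0,…,v_d` (right). -/
abbrev V (d : ℕ) := Sum (Fin (d+2)) (Fin (d+1))

def origV (d m : ℕ) : V d := Sum.inl ⟨m % (d+2), Nat.mod_lt m (by omega)⟩
def newV (d m : ℕ) : V d := Sum.inr ⟨m % (d+1), Nat.mod_lt m (by omega)⟩

variable {W : Type*} [DecidableEq W] {W' : Type*} [DecidableEq W']

def IsComplex (Δ : Set (Finset W)) : Prop := ∀ F ∈ Δ, ∀ G, G ⊆ F → G ∈ Δ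

def isFacet (Δ : Set (Finset W)) (F : Finset W) : Prop :=
  F ∈ Δ ∧ ∀ G ∈ Δ, F ⊆ G → G = F

def simplexOn (A : Finset W) : Set (Finset W) := {F | F ⊆ A}

def bdrySimplex (A : Finset W) : Set (Finset W) := {F | F ⊂ A}

def joinC (Δ Γ : Set (Finset W)) : Set (Finset W) := {s | ∃ a ∈ Δ, ∃ b ∈ Γ, s = a ∪ b}

def lkC (Δ : Set (Finset W)) (F : Finset W) : Set (Finset W) :=
  {G | Disjoint F G ∧ F ∪ G ∈ Δ}

def delFace (Δ : Set (Finset W)) (F : Finset W) : Set (Finset W) := {G ∈ Δ | ¬ F ⊆ G}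

/-- Stellar subdivision at `F` with new vertex `v`. -/
def sdC (v : W) (F : Finset W) (Δ : Set (Finset W)) : Set (Finset W) :=
  delFace Δ F ∪ joinC (simplexOn {v}) (joinC (bdrySimplex F) (lkC Δ F))

/-- Deletion of a subcomplex: the complex generated by the facets of `Δ`
that are not facets of `Γ`. -/
def delSub (Δ Γ : Set (Finset W)) : Set (Finset W) :=
  {G | ∃ F, isFacet Δ F ∧ ¬ isFacet Γ F ∧ G ⊆ F}

def IsInduced (Γ Δ : Set (Finset W)) : Prop :=
  Γ ⊆ Δ ∧ ∀ F ∈ Δ, (∀ v ∈ F, ({v} : Finset W) ∈ Γ) → F ∈ Γ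

/-- Simplicial isomorphism (via a permutation of the ambient vertex set). -/
def IsoC (Δ Γ : Set (Finset W)) : Prop :=
  ∃ e : Equiv.Perm W, ∀ F : Finset W, F ∈ Δ ↔ F.image (⇑e) ∈ Γ

def mapC (f : W → W') (Δ : Set (Finset W)) : Set (Finset W') := {F | ∃ G ∈ Δ, F = G.image f}

/-- Number of faces of cardinality `i` (i.e. dimension `i-1`). -/
noncomputable def fnum (Δ : Set (Finset W)) (i : ℕ) : ℕ := {F | F ∈ Δ ∧ F.card = i}.ncard

/-- `h`-numbers of a `d`-dimensional complex. -/
noncomputable def hnum (d : ℕ) (Δ : Set (Finset W)) (j : ℕ) : ℤ :=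
  ∑ i ∈ Finset.range (j+1),
    (-1 : ℤ)^(j-i) * ((d+1-i).choose (d+1-j) : ℤ) * (fnum Δ i : ℤ)

/-- `R` is the restriction face of the `i`-th facet of the ordering `L`. -/
def IsRestriction (L : List (Finset W)) (i : ℕ) (R : Finset W) : Prop :=
  R ⊆ L.getD i ∅ ∧ (∀ j < i, ¬ R ⊆ L.getD j ∅) ∧
    ∀ G ⊆ L.getD i ∅, (∀ j < i, ¬ G ⊆ L.getD j ∅) → R ⊆ G

def IsShelling (Δ : Set (Finset W)) (L : List (Finset W)) : Prop :=
  L.Nodup ∧ (∀ F, F ∈ L ↔ isFacet Δ F) ∧ ∀ i < L.length, ∃ R, IsRestriction L i R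

def Shellable (Δ : Set (Finset W)) : Prop := ∃ L, IsShelling Δ L

def IsRelRestriction (Sg : Set (Finset W)) (L : List (Finset W)) (i : ℕ) (R : Finset W) : Prop :=
  R ⊆ L.getD i ∅ ∧ R ∉ Sg ∧ (∀ j < i, ¬ R ⊆ L.getD j ∅) ∧
    ∀ G ⊆ L.getD i ∅, G ∉ Sg → (∀ j < i, ¬ G ⊆ L.getD j ∅) → R ⊆ G

/-- Shelling of the relative complex `(Δ, Sg)`. -/
def IsRelShelling (Δ Sg : Set (Finset W)) (L : List (Finset W)) : Prop :=
  L.Nodup ∧ (∀ F, F ∈ L ↔ (isFacet Δ F ∧ F ∉ Sg)) ∧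
    ∀ i < L.length, ∃ R, IsRelRestriction Sg L i R

/-- The facet of the `(d+1)`-simplex on `{0,…,d+1}` omitting vertex `i`. -/
def Gface (d i : ℕ) : Finset (V d) :=
  ((Finset.range (d+2)).filter (fun j => j ≠ i)).image (origV d)

def GammaC (d i : ℕ) : Set (Finset (V d)) := simplexOn (Gface d i)

def GammaU (d : ℕ) (I : Finset ℕ) : Set (Finset (V d)) := {F | ∃ i ∈ I, F ⊆ Gface d i}

/-- The face `F_i = {i+1,…,d+1}` subdivided by the diamond operation. -/
def Fsub (d i : ℕ) : Finset (V d) := (Finset.Ioc i (d+1)).image (origV d)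

/-- The diamond operation: successive stellar subdivisions at `F_0, F_1, …, F_d`
with new vertices `v_0,…,v_d` (subdivision at a non-face has no effect). -/
def Diam (d : ℕ) (Δ : Set (Finset (V d))) : Set (Finset (V d)) :=
  (List.range (d+1)).foldl (fun Γ i => sdC (newV d i) (Fsub d i) Γ) Δ

def DiamU (d : ℕ) (I : Finset ℕ) : Set (Finset (V d)) := Diam d (GammaU d I)

/-- Boundary complex of the cross-polytope on the vertex pairs `{j, v_j}`, `j ∈ S`. -/
def crossN (d : ℕ) (S : Finset ℕ) : Set (Finset (V d)) :=
  {F | (∀ x ∈ F, ∃ j ∈ S, x = origV d j ∨ x = newV d j) ∧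
       ∀ j ∈ S, ¬ (origV d j ∈ F ∧ newV d j ∈ F)}

/-- Boundary complex: generated by the faces of cardinality `n` contained in
exactly one facet. -/
def bdryC (n : ℕ) (Δ : Set (Finset W)) : Set (Finset W) :=
  {G | ∃ F, G ⊆ F ∧ F ∈ Δ ∧ F.card = n ∧ ∃! H, isFacet Δ H ∧ F ⊆ H}

/-- Positions in `P` at which `G` differs from the reference facet `F0`. -/
def diffSet (d : ℕ) (P : Finset ℕ) (F0 G : Finset (V d)) : Finset ℕ :=
  P.filter (fun j => decide (origV d j ∈ G) ≠ decide (origV d j ∈ F0))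

/-- Degree lexicographic comparison of characteristic (difference) sets. -/
def dlexLT (D D' : Finset ℕ) : Prop :=
  D.card < D'.card ∨
    (D.card = D'.card ∧ ∃ m, m ∉ D ∧ m ∈ D' ∧ ∀ j < m, (j ∈ D ↔ j ∈ D'))

/-- `L` lists the facets of `Δ` in degree lexicographic order w.r.t. `F0`. -/
def IsDegLexOrder (d : ℕ) (P : Finset ℕ) (Δ : Set (Finset (V d)))
    (F0 : Finset (V d)) (L : List (Finset (V d))) : Prop :=
  L.Nodup ∧ (∀ F, F ∈ L ↔ isFacet Δ F) ∧
    L.Pairwise (fun G G' => dlexLT (diffSet d P F0 G) (diffSet d P F0 G'))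

/-- Vertices of `F` sitting at the positions in `D`. -/
def posVerts (d : ℕ) (F : Finset (V d)) (D : Finset ℕ) : Finset (V d) :=
  F.filter (fun x => ∃ j ∈ D, x = origV d j ∨ x = newV d j)

def IsoN (Δ Γ : Set (Finset ℕ)) : Prop :=
  ∃ e : Equiv.Perm ℕ, ∀ F : Finset ℕ, F ∈ Δ ↔ F.image (⇑e) ∈ Γ

def StellarMove (Δ Γ : Set (Finset ℕ)) : Prop :=
  ∃ (F : Finset ℕ) (v : ℕ), F ∈ Δ ∧ F ≠ ∅ ∧ (∀ G ∈ Δ, v ∉ G) ∧ Γ = sdC v F Δ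

/-- PL homeomorphism of simplicial complexes, encoded via Alexander's theorem as
stellar equivalence: the equivalence relation generated by stellar subdivisions
(and their inverses, the welds) together with simplicial isomorphisms. -/
def PLHomeo (Δ Γ : Set (Finset ℕ)) : Prop :=
  Relation.EqvGen (fun A B => StellarMove A B ∨ IsoN A B) Δ Γ

def encV (d : ℕ) : V d → ℕ := Sum.elim (fun j => 2 * j.val) (fun j => 2 * j.val + 1)

def toN (d : ℕ) (Δ : Set (Finset (V d))) : Set (Finset ℕ) := mapC (encV d) Δ

def ballN (c : ℕ) : Set (Finset ℕ) := {F | F ⊆ Finset.range c}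

def sphereN (c : ℕ) : Set (Finset ℕ) := {F | F ⊂ Finset.range (c+1)}

/-- `Δ` is a combinatorial ball of dimension `c-1` (a `(c-1)`-simplex has `c` vertices). -/
def IsCombBall (d c : ℕ) (Δ : Set (Finset (V d))) : Prop := PLHomeo (toN d Δ) (ballN c)

/-- `Δ` is a combinatorial sphere of dimension `c-1`. -/
def IsCombSphere (d c : ℕ) (Δ : Set (Finset (V d))) : Prop := PLHomeo (toN d Δ) (sphereN c)

def ConnC (Δ : Set (Finset W)) : Prop :=
  ∀ u v : W, ({u} : Finset W) ∈ Δ → ({v} : Finset W) ∈ Δ →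
    Relation.ReflTransGen (fun a b => ({a, b} : Finset W) ∈ Δ) u v

/-- Combinatorial `d`-manifold (possibly with boundary): connected, pure, and all
links of nonempty faces are combinatorial balls or spheres of dimension `d - |F|`. -/
def IsCombManifold (d : ℕ) (Δ : Set (Finset (V d))) : Prop :=
  IsComplex Δ ∧ (∅ : Finset (V d)) ∈ Δ ∧ ConnC Δ ∧
  (∀ F ∈ Δ, ∃ G, isFacet Δ G ∧ F ⊆ G ∧ G.card = d+1) ∧
  ∀ F ∈ Δ, F ≠ (∅ : Finset (V d)) →
    (IsCombBall d (d+1-F.card) (lkC Δ F) ∨ IsCombSphere d (d+1-F.card) (lkC Δ F))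

def liftV (d : ℕ) : V d → V (d+1) := Sum.map Fin.castSucc Fin.castSucc

/-- The relabeling `π : i ↦ i+1`, `v_i ↦ v_{i+1}`. -/
def piV (d : ℕ) : V d → V (d+1) := Sum.map Fin.succ Fin.succ

/-- The relabeling `ρ : i ↦ i-1`, `v_i ↦ v_{i-1}` (indices mod `d+1`). -/
def rhoV (d : ℕ) : V d → V d := fun x =>
  match x with
  | Sum.inl j => origV d ((j.val + d) % (d+1))
  | Sum.inr j => newV d ((j.val + d) % (d+1))

/-- `ψ` swaps the vertices `d` and `v_d`. -/
def psiV (d : ℕ) : V d → V d := fun x => Equiv.swap (origV d d) (newV d d) x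

def sigmaV (d : ℕ) : V d → V d := psiV d ∘ rhoV d

/-- `Δ` is (isomorphic to) the boundary complex of the `(d+1)`-dimensional
cross-polytope. -/
def IsCrossBdry (d : ℕ) (Δ : Set (Finset W)) : Prop :=
  ∃ f : Fin (d+1) × Bool → W, Function.Injective f ∧
    Δ = {F | (∀ v ∈ F, ∃ p, v = f p) ∧
             ∀ j : Fin (d+1), ¬ (f (j, true) ∈ F ∧ f (j, false) ∈ F)}

/-- `Sg` is a connected sum of `Δ` and `Γ`: they meet exactly in the full simplex
on a common facet `F`, which is removed. -/
def IsConnSum (Δ Γ Sg : Set (Finset W)) : Prop :=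
  ∃ F : Finset W, isFacet Δ F ∧ isFacet Γ F ∧ Δ ∩ Γ = simplexOn F ∧ Sg = (Δ ∪ Γ) \ {F}

/-- Connected sum of `m+1` copies of the boundary of the `(d+1)`-cross-polytope. -/
def IsCrossStacked (d : ℕ) : ℕ → Set (Finset W) → Prop
  | 0, Δ => IsCrossBdry d Δ
  | (m+1), Δ => ∃ A B : Set (Finset W), IsCrossStacked d m A ∧ IsCrossBdry d B ∧ IsConnSum A B Δ

/-- The initial facet of the block `Diam(Γ_{iℓ})` (for block index `ℓ ≥ 1`;
block `0` uses the facet `G0` meeting the boundary). -/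
def initFacet (d i1 iℓ : ℕ) (G0 : Finset (V d)) (ℓ : ℕ) : Finset (V d) :=
  if ℓ = 0 then G0
  else ((Finset.range iℓ).image (origV d)) ∪ {newV d iℓ} ∪
       ((Finset.Ioo iℓ (max i1 iℓ)).image (origV d)) ∪
       ((Finset.Icc (max i1 iℓ) d).image (newV d))

section Complexes

variable {W W' : Type*}

theorem mem_sdC_iff [DecidableEq W] {v : W} {A G : Finset W} {Δ : Set (Finset W)} (hvA : v ∉ A)
    (hv : ∀ F ∈ Δ, v ∉ F) :
    G ∈ sdC v A Δ ↔ ¬ A ⊆ G ∧ (G ∈ Δ ∨ G.erase v ∪ A ∈ Δ) := by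
  simp only [sdC, delFace, joinC, lkC, simplexOn, bdrySimplex, Set.mem_union, Set.mem_ofPred_eq,
    Finset.subset_singleton_iff']
  constructor
  · rintro (⟨hG, hAG⟩ | ⟨a, ha, _, ⟨b, hb, l, ⟨hAl, hl⟩, rfl⟩, rfl⟩)
    · exact ⟨hAG, Or.inl hG⟩
    have hvl : v ∉ l := fun h => hv _ hl (Finset.mem_union_right _ h)
    obtain ⟨x, hxA, hxb⟩ := Finset.exists_of_ssubset hb
    refine ⟨fun hA => ?_, Or.inr ?_⟩
    · have hx := hA hxA
      simp only [Finset.mem_union] at hx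
      rcases hx with hxa | hxb' | hxl
      · exact hvA (ha x hxa ▸ hxA)
      · exact hxb hxb'
      · exact Finset.disjoint_left.1 hAl hxA hxl
    · convert hl using 1
      ext x
      simp only [Finset.mem_union, Finset.mem_erase]
      constructor
      · rintro (⟨hxv, hxa | hxb | hxl⟩ | hxA)
        exacts [absurd (ha x hxa) hxv, Or.inl (hb.subset hxb), Or.inr hxl, Or.inl hxA]
      · rintro (hxA | hxl)
        exacts [Or.inr hxA, Or.inl ⟨fun h => hvl (h ▸ hxl), Or.inr (Or.inr hxl)⟩]
  · rintro ⟨hAG, hG | hG⟩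
    · exact Or.inl ⟨hG, hAG⟩
    refine Or.inr ⟨G.filter (· = v), fun x hx => (Finset.mem_filter.1 hx).2, _,
      ⟨G ∩ A, ?_, G \ insert v A, ⟨?_, ?_⟩, rfl⟩, ?_⟩
    · exact Finset.ssubset_iff_subset_ne.2 ⟨Finset.inter_subset_right,
        fun h => hAG (h ▸ Finset.inter_subset_left)⟩
    · exact Finset.disjoint_left.2 fun _ hxA hx =>
        (Finset.mem_sdiff.1 hx).2 (Finset.mem_insert_of_mem hxA)
    · convert hG using 1
      ext x
      simp only [Finset.mem_union, Finset.mem_erase, Finset.mem_sdiff, Finset.mem_insert]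
      tauto
    · ext x
      simp only [Finset.mem_union, Finset.mem_filter, Finset.mem_inter, Finset.mem_sdiff,
        Finset.mem_insert]
      tauto

theorem mem_mapC_iff_of_leftInvOn [DecidableEq W] [DecidableEq W'] {f : W → W'} {g : W' → W}
    {Δ : Set (Finset W)} {G : Finset W'} (hgf : ∀ F ∈ Δ, ∀ x ∈ F, g (f x) = x) :
    G ∈ mapC f Δ ↔ G.image g ∈ Δ ∧ ∀ y ∈ G, f (g y) = y := by
  constructor
  · rintro ⟨F, hF, rfl⟩
    rw [Finset.image_image, Finset.image_congr (f := g ∘ f) (g := id) (hgf F hF), Finset.image_id]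
    refine ⟨hF, fun y hy => ?_⟩
    obtain ⟨x, hx, rfl⟩ := Finset.mem_image.1 hy
    rw [hgf F hF x hx]
  · rintro ⟨hG, hfg⟩
    refine ⟨_, hG, ?_⟩
    rw [Finset.image_image, Finset.image_congr (f := f ∘ g) (g := id) hfg, Finset.image_id]

theorem mem_image_iff_of_inverse [DecidableEq W] {f : W → W'} {g : W' → W} {G : Finset W'}
    {x : W} (hx : g (f x) = x) (hG : ∀ y ∈ G, f (g y) = y) : x ∈ G.image g ↔ f x ∈ G := by
  constructor
  · intro h
    obtain ⟨y, hy, rfl⟩ := Finset.mem_image.1 h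
    rwa [hG y hy]
  · exact fun h => Finset.mem_image.2 ⟨f x, h, hx⟩

theorem mapC_comp {W'' : Type*} [DecidableEq W'] [DecidableEq W''] (g : W' → W'') (f : W → W')
    (Δ : Set (Finset W)) : mapC (g ∘ f) Δ = mapC g (mapC f Δ) := by
  ext G
  constructor
  · rintro ⟨F, hF, rfl⟩
    exact ⟨_, ⟨F, hF, rfl⟩, Finset.image_image.symm⟩
  · rintro ⟨_, ⟨F, hF, rfl⟩, rfl⟩
    exact ⟨F, hF, Finset.image_image⟩

theorem isInduced_sep_not_mem (Δ : Set (Finset W)) (x : W) : IsInduced {G ∈ Δ | x ∉ G} Δ :=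
  ⟨fun _ hG => hG.1, fun _ hF hsingle =>
    ⟨hF, fun hx => (hsingle x hx).2 (Finset.mem_singleton_self x)⟩⟩

end Complexes

theorem origV_inj {d a b : ℕ} (ha : a ≤ d + 1) (hb : b ≤ d + 1) :
    origV d a = origV d b ↔ a = b := by
  simp [origV, Nat.mod_eq_of_lt (Nat.lt_succ_of_le ha), Nat.mod_eq_of_lt (Nat.lt_succ_of_le hb)]

theorem newV_inj {d a b : ℕ} (ha : a ≤ d) (hb : b ≤ d) : newV d a = newV d b ↔ a = b := by
  simp [newV, Nat.mod_eq_of_lt (Nat.lt_succ_of_le ha), Nat.mod_eq_of_lt (Nat.lt_succ_of_le hb)]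

@[simp]
theorem origV_ne_newV {d a b : ℕ} : origV d a ≠ newV d b := by simp [origV, newV]

@[simp]
theorem newV_ne_origV {d a b : ℕ} : newV d a ≠ origV d b := by simp [origV, newV]

theorem origV_of_lt {d j : ℕ} (hj : j < d + 2) : origV d j = Sum.inl ⟨j, hj⟩ := by
  simp [origV, Nat.mod_eq_of_lt hj]

theorem newV_of_lt {d j : ℕ} (hj : j < d + 1) : newV d j = Sum.inr ⟨j, hj⟩ := by
  simp [newV, Nat.mod_eq_of_lt hj]

theorem exists_eq_origV_or_newV {d : ℕ} (x : V d) :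
    (∃ a ≤ d + 1, x = origV d a) ∨ ∃ a ≤ d, x = newV d a := by
  rcases x with j | j
  · exact Or.inl ⟨j, Nat.le_of_lt_succ j.isLt, (origV_of_lt j.isLt).symm⟩
  · exact Or.inr ⟨j, Nat.le_of_lt_succ j.isLt, (newV_of_lt j.isLt).symm⟩

theorem origV_mem_Fsub {d k m : ℕ} (hm : m ≤ d + 1) : origV d m ∈ Fsub d k ↔ k < m := by
  simp only [Fsub, Finset.mem_image, Finset.mem_Ioc]
  constructor
  · rintro ⟨p, ⟨hkp, hp⟩, he⟩
    rw [origV_inj hp hm] at he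
    omega
  · exact fun hkm => ⟨m, ⟨hkm, hm⟩, rfl⟩

theorem newV_not_mem_Fsub {d k m : ℕ} : newV d m ∉ Fsub d k := by
  simp [Fsub]

theorem not_Fsub_subset_iff {d k : ℕ} {F : Finset (V d)} :
    ¬ Fsub d k ⊆ F ↔ ∃ m, k < m ∧ m ≤ d + 1 ∧ origV d m ∉ F := by
  simp [Fsub, Finset.image_subset_iff]

theorem subset_Gface_iff {d i : ℕ} (hi : i ≤ d + 1) {F : Finset (V d)} :
    F ⊆ Gface d i ↔ (∀ j ≤ d, newV d j ∉ F) ∧ origV d i ∉ F := by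
  constructor
  · intro hF
    refine ⟨fun j _ hj => ?_, fun hiF => ?_⟩
    · obtain ⟨m, -, hm⟩ := Finset.mem_image.1 (hF hj)
      exact origV_ne_newV hm
    · obtain ⟨m, hm, he⟩ := Finset.mem_image.1 (hF hiF)
      simp only [Finset.mem_filter, Finset.mem_range] at hm
      exact hm.2 ((origV_inj (by omega) hi).1 he)
  · rintro ⟨hnew, hiF⟩ x hx
    rcases exists_eq_origV_or_newV x with ⟨a, ha, rfl⟩ | ⟨a, ha, rfl⟩
    · refine Finset.mem_image.2
        ⟨a, Finset.mem_filter.2 ⟨Finset.mem_range.2 (by omega), ?_⟩, rfl⟩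
      rintro rfl
      exact hiF hx
    · exact absurd hx (hnew a ha)

def NoAntipodal (d : ℕ) (F : Finset (V d)) : Prop :=
  ∀ j ≤ d, ¬ (origV d j ∈ F ∧ newV d j ∈ F)

def AvoidsPrefix (d : ℕ) (I : Finset ℕ) (F : Finset (V d)) : Prop :=
  ∃ i ∈ I, origV d i ∉ F ∧ ∀ j < i, newV d j ∉ F

/-- The complex obtained from `GammaU d I` by the stellar subdivisions at `F_0, …, F_{k-1}`. -/
def diamStage (d k : ℕ) (I : Finset ℕ) : Set (Finset (V d)) :=
  {F | (∀ j ≤ d, newV d j ∈ F → j < k) ∧ NoAntipodal d F ∧ AvoidsPrefix d I F ∧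
    ∃ m, k ≤ m ∧ m ≤ d + 1 ∧ origV d m ∉ F}

section Stages

variable {d k : ℕ} {I : Finset ℕ} {G : Finset (V d)}

theorem gammaU_eq_diamStage_zero (hI : ∀ i ∈ I, i ≤ d + 1) :
    GammaU d I = diamStage d 0 I := by
  ext F
  simp only [GammaU, diamStage, NoAntipodal, AvoidsPrefix, Set.mem_ofPred_eq]
  constructor
  · rintro ⟨i, hiI, hF⟩
    obtain ⟨hnew, hiF⟩ := (subset_Gface_iff (hI i hiI)).1 hF
    exact ⟨fun j hj hjF => absurd hjF (hnew j hj), fun j hj h => hnew j hj h.2,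
      ⟨i, hiI, hiF, fun j hji => hnew j (by have := hI i hiI; omega)⟩,
      i, Nat.zero_le i, hI i hiI, hiF⟩
  · rintro ⟨hnew, -, ⟨i, hiI, hiF, -⟩, -⟩
    exact ⟨i, hiI, (subset_Gface_iff (hI i hiI)).2 ⟨fun j hj hjF => absurd (hnew j hj hjF)
      (Nat.not_lt_zero j), hiF⟩⟩

theorem origV_mem_erase_union_Fsub {j : ℕ} (hj : j ≤ d + 1) :
    origV d j ∈ G.erase (newV d k) ∪ Fsub d k ↔ origV d j ∈ G ∨ k < j := by
  simp [origV_mem_Fsub hj]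

theorem newV_mem_erase_union_Fsub {j : ℕ} (hj : j ≤ d) (hk : k ≤ d) :
    newV d j ∈ G.erase (newV d k) ∪ Fsub d k ↔ j ≠ k ∧ newV d j ∈ G := by
  simp [newV_not_mem_Fsub, newV_inj hj hk]

theorem mem_diamStage_succ_of_mem (hG : G ∈ diamStage d k I) (hsub : ¬ Fsub d k ⊆ G) :
    G ∈ diamStage d (k + 1) I := by
  obtain ⟨hnew, hanti, havoid, -⟩ := hG
  obtain ⟨m, hkm, hm, hmG⟩ := not_Fsub_subset_iff.1 hsub
  exact ⟨fun j hj hjG => Nat.lt_succ_of_lt (hnew j hj hjG), hanti, havoid, m, hkm, hm, hmG⟩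

theorem mem_diamStage_succ_of_erase_union (hk : k ≤ d) (hI : ∀ i ∈ I, i ≤ d + 1)
    (hH : G.erase (newV d k) ∪ Fsub d k ∈ diamStage d k I) (hsub : ¬ Fsub d k ⊆ G) :
    G ∈ diamStage d (k + 1) I := by
  obtain ⟨hnew, hanti, ⟨i, hiI, hiH, hpre⟩, m, hkm, hm, hmH⟩ := hH
  rw [origV_mem_erase_union_Fsub hm] at hmH
  have hmk : m = k := by omega
  subst hmk
  rw [origV_mem_erase_union_Fsub (hI i hiI)] at hiH
  obtain ⟨m', hkm', hm', hm'G⟩ := not_Fsub_subset_iff.1 hsub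
  refine ⟨fun j hj hjG => ?_, fun j hj ⟨hoG, hnG⟩ => ?_,
    ⟨i, hiI, fun h => hiH (Or.inl h), fun j hji hjG => ?_⟩, m', hkm', hm', hm'G⟩
  · by_cases hjm : j = m
    · omega
    · exact Nat.lt_succ_of_lt (hnew j hj ((newV_mem_erase_union_Fsub hj hk).2 ⟨hjm, hjG⟩))
  · by_cases hjm : j = m
    · exact hmH (Or.inl (hjm ▸ hoG))
    · exact hanti j hj ⟨(origV_mem_erase_union_Fsub (by omega)).2 (Or.inl hoG),
        (newV_mem_erase_union_Fsub hj hk).2 ⟨hjm, hnG⟩⟩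
  · exact hpre j hji ((newV_mem_erase_union_Fsub (by omega) hk).2 ⟨by omega, hjG⟩)

theorem mem_diamStage_or_erase_union_of_succ (hk : k ≤ d) (hG : G ∈ diamStage d (k + 1) I) :
    G ∈ diamStage d k I ∨ G.erase (newV d k) ∪ Fsub d k ∈ diamStage d k I := by
  obtain ⟨hnew, hanti, ⟨i, hiI, hiG, hpre⟩, m, hkm, hm, hmG⟩ := hG
  by_cases hkG : newV d k ∈ G
  · have hik : i ≤ k := by
      by_contra h
      exact hpre k (by omega) hkG
    refine Or.inr ⟨fun j hj hjH => ?_, fun j hj ⟨hoH, hnH⟩ => ?_,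
      ⟨i, hiI, ?_, fun j hji hjH => ?_⟩, k, le_rfl, by omega, ?_⟩
    · obtain ⟨hjk, hjG⟩ := (newV_mem_erase_union_Fsub hj hk).1 hjH
      have := hnew j hj hjG
      omega
    · obtain ⟨hjk, hjG⟩ := (newV_mem_erase_union_Fsub hj hk).1 hnH
      rcases (origV_mem_erase_union_Fsub (by omega)).1 hoH with hoG | hkj
      · exact hanti j hj ⟨hoG, hjG⟩
      · have := hnew j hj hjG
        omega
    · rw [origV_mem_erase_union_Fsub (by omega)]
      exact fun h => h.elim hiG (by omega)
    · exact hpre j hji ((newV_mem_erase_union_Fsub (by omega) hk).1 hjH).2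
    · rw [origV_mem_erase_union_Fsub (by omega)]
      exact fun h => h.elim (fun hoG => hanti k hk ⟨hoG, hkG⟩) (lt_irrefl k)
  · refine Or.inl ⟨fun j hj hjG => ?_, hanti, ⟨i, hiI, hiG, hpre⟩, m, by omega, hm, hmG⟩
    have := hnew j hj hjG
    have hjk : j ≠ k := fun h => hkG (h ▸ hjG)
    omega

theorem sdC_diamStage (hk : k ≤ d) (hI : ∀ i ∈ I, i ≤ d + 1) :
    sdC (newV d k) (Fsub d k) (diamStage d k I) = diamStage d (k + 1) I := by
  ext G
  rw [mem_sdC_iff newV_not_mem_Fsub (fun F hF hkF => lt_irrefl k (hF.1 k hk hkF))]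
  constructor
  · rintro ⟨hsub, hG | hH⟩
    exacts [mem_diamStage_succ_of_mem hG hsub, mem_diamStage_succ_of_erase_union hk hI hH hsub]
  · intro hG
    obtain ⟨m, hkm, hm, hmG⟩ := hG.2.2.2
    exact ⟨not_Fsub_subset_iff.2 ⟨m, hkm, hm, hmG⟩,
      mem_diamStage_or_erase_union_of_succ hk hG⟩

theorem foldl_sdC_gammaU_eq_diamStage (hI : ∀ i ∈ I, i ≤ d + 1) (hk : k ≤ d + 1) :
    (List.range k).foldl (fun Γ i => sdC (newV d i) (Fsub d i) Γ) (GammaU d I) =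
      diamStage d k I := by
  induction k with
  | zero => exact gammaU_eq_diamStage_zero hI
  | succ k ih =>
    rw [List.range_succ, List.foldl_append, ih (by omega)]
    exact sdC_diamStage (by omega) hI

theorem diamU_eq (hI : ∀ i ∈ I, i ≤ d + 1) :
    DiamU d I = {F | NoAntipodal d F ∧ origV d (d + 1) ∉ F ∧ AvoidsPrefix d I F} := by
  rw [DiamU, Diam, foldl_sdC_gammaU_eq_diamStage hI le_rfl]
  ext F
  constructor
  · rintro ⟨-, hanti, havoid, m, hm, hm', hmF⟩
    exact ⟨hanti, le_antisymm hm' hm ▸ hmF, havoid⟩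
  · rintro ⟨hanti, htop, havoid⟩
    exact ⟨fun j hj _ => Nat.lt_succ_of_le hj, hanti, havoid, d + 1, le_rfl, le_rfl, htop⟩

end Stages

section Rho

variable {n : ℕ} {I : Finset ℕ} {G : Finset (V n)}

theorem rhoV_origV_succ {j : ℕ} (hj : j ≤ n) : rhoV n (origV n (j + 1)) = origV n j := by
  rw [origV_of_lt (by omega)]
  simp only [rhoV]
  rw [show j + 1 + n = j + (n + 1) by omega, Nat.add_mod_right,
    Nat.mod_eq_of_lt (by omega)]

theorem rhoV_origV_zero : rhoV n (origV n 0) = origV n n := by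
  rw [origV_of_lt (by omega)]
  simp only [rhoV, Nat.zero_add, Nat.mod_eq_of_lt (Nat.lt_succ_self n)]

theorem rhoV_newV_succ {j : ℕ} (hj : j < n) : rhoV n (newV n (j + 1)) = newV n j := by
  rw [newV_of_lt (by omega)]
  simp only [rhoV]
  rw [show j + 1 + n = j + (n + 1) by omega, Nat.add_mod_right,
    Nat.mod_eq_of_lt (by omega)]

theorem rhoV_newV_zero : rhoV n (newV n 0) = newV n n := by
  rw [newV_of_lt (by omega)]
  simp only [rhoV, Nat.zero_add, Nat.mod_eq_of_lt (Nat.lt_succ_self n)]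

/-- Inverse of `rhoV n` away from the vertex `n + 1`, where `rhoV n` is not injective. -/
def rotateUp (n : ℕ) : Equiv.Perm (V n) :=
  Equiv.sumCongr (Fin.last n).castSucc.cycleRange (Fin.last n).cycleRange

theorem rotateUp_origV_of_lt {j : ℕ} (hj : j < n) :
    rotateUp n (origV n j) = origV n (j + 1) := by
  rw [origV_of_lt (by omega), origV_of_lt (by omega)]
  simp only [rotateUp, Equiv.sumCongr_apply, Sum.map_inl, Sum.inl.injEq, Fin.ext_iff]
  exact Fin.coe_cycleRange_of_lt (by simp [Fin.lt_def, hj])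

theorem rotateUp_origV_self : rotateUp n (origV n n) = origV n 0 := by
  rw [origV_of_lt (by omega), origV_of_lt (by omega)]
  simp only [rotateUp, Equiv.sumCongr_apply, Sum.map_inl, Sum.inl.injEq]
  exact Fin.cycleRange_of_eq rfl

theorem rotateUp_origV_top : rotateUp n (origV n (n + 1)) = origV n (n + 1) := by
  rw [origV_of_lt (by omega)]
  simp only [rotateUp, Equiv.sumCongr_apply, Sum.map_inl]
  rw [Fin.cycleRange_of_gt (by simp [Fin.lt_def])]

theorem rotateUp_newV_of_lt {j : ℕ} (hj : j < n) :
    rotateUp n (newV n j) = newV n (j + 1) := by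
  rw [newV_of_lt (by omega), newV_of_lt (by omega)]
  simp only [rotateUp, Equiv.sumCongr_apply, Sum.map_inr, Sum.inr.injEq, Fin.ext_iff]
  exact Fin.coe_cycleRange_of_lt (by simp [Fin.lt_def, hj])

theorem rotateUp_newV_self : rotateUp n (newV n n) = newV n 0 := by
  rw [newV_of_lt (by omega), newV_of_lt (by omega)]
  simp only [rotateUp, Equiv.sumCongr_apply, Sum.map_inr, Sum.inr.injEq]
  exact Fin.cycleRange_of_eq rfl

theorem rotateUp_rhoV {x : V n} (hx : x ≠ origV n (n + 1)) : rotateUp n (rhoV n x) = x := by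
  rcases exists_eq_origV_or_newV x with ⟨a, ha, rfl⟩ | ⟨a, ha, rfl⟩
  · obtain _ | j := a
    · rw [rhoV_origV_zero, rotateUp_origV_self]
    · have hj : j < n := by
        by_contra h
        exact hx (by rw [show j = n by omega])
      rw [rhoV_origV_succ hj.le, rotateUp_origV_of_lt hj]
  · obtain _ | j := a
    · rw [rhoV_newV_zero, rotateUp_newV_self]
    · rw [rhoV_newV_succ (by omega), rotateUp_newV_of_lt (by omega)]

theorem rhoV_rotateUp {y : V n} (hy : y ≠ origV n (n + 1)) : rhoV n (rotateUp n y) = y := by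
  refine (rotateUp n).injective (rotateUp_rhoV fun h => hy ?_)
  rw [← rotateUp_origV_top] at h
  exact (rotateUp n).injective h

theorem mem_image_rotateUp {x : V n} : x ∈ G.image (rotateUp n) ↔ (rotateUp n).symm x ∈ G :=
  mem_image_iff_of_inverse (Equiv.apply_symm_apply _ x) fun y _ => Equiv.symm_apply_apply _ y

theorem rotateUp_symm_origV_succ {j : ℕ} (hj : j < n) :
    (rotateUp n).symm (origV n (j + 1)) = origV n j :=
  (Equiv.symm_apply_eq _).2 (rotateUp_origV_of_lt hj).symm

theorem rotateUp_symm_newV_succ {j : ℕ} (hj : j < n) :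
    (rotateUp n).symm (newV n (j + 1)) = newV n j :=
  (Equiv.symm_apply_eq _).2 (rotateUp_newV_of_lt hj).symm

theorem rotateUp_symm_origV_zero : (rotateUp n).symm (origV n 0) = origV n n :=
  (Equiv.symm_apply_eq _).2 rotateUp_origV_self.symm

theorem rotateUp_symm_newV_zero : (rotateUp n).symm (newV n 0) = newV n n :=
  (Equiv.symm_apply_eq _).2 rotateUp_newV_self.symm

theorem rotateUp_symm_origV_top : (rotateUp n).symm (origV n (n + 1)) = origV n (n + 1) :=
  (Equiv.symm_apply_eq _).2 rotateUp_origV_top.symm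

theorem noAntipodal_image_rotateUp :
    NoAntipodal n (G.image (rotateUp n)) ↔ NoAntipodal n G := by
  simp only [NoAntipodal, mem_image_rotateUp]
  constructor
  · intro h j hj
    rcases hj.lt_or_eq with hj | rfl
    · simpa [rotateUp_symm_origV_succ hj, rotateUp_symm_newV_succ hj] using h (j + 1) hj
    · simpa [rotateUp_symm_origV_zero, rotateUp_symm_newV_zero] using h 0 (Nat.zero_le _)
  · rintro h (_ | j) hj
    · simpa [rotateUp_symm_origV_zero, rotateUp_symm_newV_zero] using h n le_rfl
    · simpa [rotateUp_symm_origV_succ hj, rotateUp_symm_newV_succ hj] using h j (by omega)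

theorem avoidsPrefix_image_rotateUp (hI : ∀ i ∈ I, i < n) :
    AvoidsPrefix n (I.image (· + 1)) (G.image (rotateUp n)) ↔
      newV n n ∉ G ∧ AvoidsPrefix n I G := by
  simp only [AvoidsPrefix, Finset.exists_mem_image, mem_image_rotateUp]
  have hprefix : ∀ i ∈ I, (∀ j < i + 1, (rotateUp n).symm (newV n j) ∉ G) ↔
      newV n n ∉ G ∧ ∀ j < i, newV n j ∉ G := by
    intro i hi
    constructor
    · intro h
      refine ⟨by simpa [rotateUp_symm_newV_zero] using h 0 (Nat.succ_pos i), fun j hj => ?_⟩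
      simpa [rotateUp_symm_newV_succ (lt_trans hj (hI i hi))] using h (j + 1) (by omega)
    · rintro ⟨hn, h⟩ (_ | j) hj
      · rwa [rotateUp_symm_newV_zero]
      · rw [rotateUp_symm_newV_succ (by have := hI i hi; omega)]
        exact h j (by omega)
  constructor
  · rintro ⟨i, hi, hiG, hpre⟩
    rw [rotateUp_symm_origV_succ (hI i hi)] at hiG
    exact ⟨((hprefix i hi).1 hpre).1, i, hi, hiG, ((hprefix i hi).1 hpre).2⟩
  · rintro ⟨hn, i, hi, hiG, hpre⟩
    exact ⟨i, hi, by rwa [rotateUp_symm_origV_succ (hI i hi)], (hprefix i hi).2 ⟨hn, hpre⟩⟩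

theorem mapC_rhoV_diamU (hI : ∀ i ∈ I, i < n) :
    mapC (rhoV n) (DiamU n (I.image (· + 1))) = {G ∈ DiamU n I | newV n n ∉ G} := by
  have hI' : ∀ i ∈ I.image (· + 1), i ≤ n + 1 :=
    Finset.forall_mem_image.2 fun i hi => Nat.succ_le_succ (hI i hi).le
  rw [diamU_eq hI', diamU_eq fun i hi => (hI i hi).le.trans n.le_succ]
  ext G
  rw [mem_mapC_iff_of_leftInvOn fun F hF x hx => rotateUp_rhoV fun h => hF.2.1 (h ▸ hx)]
  simp only [Set.mem_ofPred_eq, noAntipodal_image_rotateUp, avoidsPrefix_image_rotateUp hI,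
    mem_image_rotateUp, rotateUp_symm_origV_top]
  have hfix : (∀ y ∈ G, rhoV n (rotateUp n y) = y) ↔ origV n (n + 1) ∉ G := by
    refine ⟨fun h htop => ?_, fun htop y hy => rhoV_rotateUp fun h => htop (h ▸ hy)⟩
    have := h _ htop
    rw [rotateUp_origV_top, rhoV_origV_succ le_rfl, origV_inj (by omega) le_rfl] at this
    omega
  rw [hfix]
  tauto

end Rho

section Sigma

variable {n : ℕ} {I : Finset ℕ} {G : Finset (V n)}

theorem psiV_psiV (x : V n) : psiV n (psiV n x) = x := Equiv.swap_apply_self _ _ x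

theorem psiV_origV_of_ne {j : ℕ} (hj : j ≤ n + 1) (hjn : j ≠ n) :
    psiV n (origV n j) = origV n j :=
  Equiv.swap_apply_of_ne_of_ne (fun h => hjn ((origV_inj hj n.le_succ).1 h)) origV_ne_newV

theorem psiV_newV_of_lt {j : ℕ} (hj : j < n) : psiV n (newV n j) = newV n j :=
  Equiv.swap_apply_of_ne_of_ne newV_ne_origV fun h => hj.ne ((newV_inj hj.le le_rfl).1 h)

theorem mem_image_psiV {x : V n} : x ∈ G.image (psiV n) ↔ psiV n x ∈ G :=
  mem_image_iff_of_inverse (psiV_psiV x) fun y _ => psiV_psiV y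

theorem image_psiV_mem_diamU (hI : ∀ i ∈ I, i < n) :
    G.image (psiV n) ∈ DiamU n I ↔ G ∈ DiamU n I := by
  rw [diamU_eq fun i hi => (hI i hi).le.trans n.le_succ]
  simp only [Set.mem_ofPred_eq, NoAntipodal, AvoidsPrefix, mem_image_psiV,
    psiV_origV_of_ne le_rfl (Nat.succ_ne_self n)]
  have hanti : ∀ j ≤ n, ¬ (psiV n (origV n j) ∈ G ∧ psiV n (newV n j) ∈ G) ↔
      ¬ (origV n j ∈ G ∧ newV n j ∈ G) := by
    intro j hj
    rcases hj.lt_or_eq with hj | rfl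
    · rw [psiV_origV_of_ne (by omega) hj.ne, psiV_newV_of_lt hj]
    · rw [psiV, psiV, Equiv.swap_apply_left, Equiv.swap_apply_right, and_comm]
  have hprefix : ∀ i ∈ I, (psiV n (origV n i) ∉ G ∧ ∀ j < i, psiV n (newV n j) ∉ G) ↔
      (origV n i ∉ G ∧ ∀ j < i, newV n j ∉ G) := by
    intro i hi
    have := hI i hi
    rw [psiV_origV_of_ne (by omega) this.ne]
    exact and_congr_right' (forall₂_congr fun j hj => by rw [psiV_newV_of_lt (by omega)])
  rw [forall₂_congr hanti]
  exact and_congr_right' (and_congr_right' (exists_congr fun i => and_congr_right (hprefix i)))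

theorem mapC_sigmaV_diamU (hI : ∀ i ∈ I, i < n) :
    mapC (sigmaV n) (DiamU n (I.image (· + 1))) = {G ∈ DiamU n I | origV n n ∉ G} := by
  rw [sigmaV, mapC_comp, mapC_rhoV_diamU hI]
  ext G
  rw [mem_mapC_iff_of_leftInvOn fun _ _ x _ => psiV_psiV x]
  simp only [Set.mem_ofPred_eq, image_psiV_mem_diamU hI, mem_image_psiV, psiV,
    Equiv.swap_apply_right]
  exact ⟨fun h => h.1, fun h => ⟨h, fun y _ => Equiv.swap_apply_self _ _ y⟩⟩

end Sigma

section Lift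

variable {d : ℕ} {I : Finset ℕ} {G : Finset (V (d + 1))}

def unliftV (d : ℕ) : V (d + 1) → V d := Sum.elim (fun j => origV d j) (fun j => newV d j)

theorem unliftV_liftV (x : V d) : unliftV d (liftV d x) = x := by
  rcases x with j | j
  · exact origV_of_lt j.isLt
  · exact newV_of_lt j.isLt

theorem liftV_origV {j : ℕ} (hj : j ≤ d + 1) : liftV d (origV d j) = origV (d + 1) j := by
  rw [origV_of_lt (by omega), origV_of_lt (by omega)]
  rfl

theorem liftV_newV {j : ℕ} (hj : j ≤ d) : liftV d (newV d j) = newV (d + 1) j := by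
  rw [newV_of_lt (by omega), newV_of_lt (by omega)]
  rfl

theorem liftV_ne_origV_top (x : V d) : liftV d x ≠ origV (d + 1) (d + 2) := by
  rcases x with j | j
  · rw [origV_of_lt (by omega)]
    simp [liftV, Fin.ext_iff, j.isLt.ne]
  · simp [liftV, origV]

theorem liftV_ne_newV_top (x : V d) : liftV d x ≠ newV (d + 1) (d + 1) := by
  rcases x with j | j
  · simp [liftV, newV]
  · rw [newV_of_lt (by omega)]
    simp [liftV, Fin.ext_iff, j.isLt.ne]

theorem liftV_unliftV_eq_self_iff :
    (∀ y ∈ G, liftV d (unliftV d y) = y) ↔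
      origV (d + 1) (d + 2) ∉ G ∧ newV (d + 1) (d + 1) ∉ G := by
  refine ⟨fun h => ⟨fun hG => liftV_ne_origV_top _ (h _ hG),
    fun hG => liftV_ne_newV_top _ (h _ hG)⟩, fun ⟨htop, hnew⟩ y hy => ?_⟩
  rcases exists_eq_origV_or_newV y with ⟨a, ha, rfl⟩ | ⟨a, ha, rfl⟩
  · have ha : a ≤ d + 1 := by
      by_contra h
      exact htop (by rwa [show a = d + 2 by omega] at hy)
    rw [← liftV_origV ha, unliftV_liftV]
  · have ha : a ≤ d := by
      by_contra h
      exact hnew (by rwa [show a = d + 1 by omega] at hy)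
    rw [← liftV_newV ha, unliftV_liftV]

theorem image_unliftV_mem_diamU (hI : ∀ i ∈ I, i ≤ d)
    (hG : origV (d + 1) (d + 2) ∉ G ∧ newV (d + 1) (d + 1) ∉ G) :
    G.image (unliftV d) ∈ DiamU d I ↔ G ∈ DiamU (d + 1) I ∧ origV (d + 1) (d + 1) ∉ G := by
  rw [diamU_eq fun i hi => (hI i hi).trans d.le_succ,
    diamU_eq fun i hi => (hI i hi).trans (by omega)]
  simp only [Set.mem_ofPred_eq, NoAntipodal, AvoidsPrefix]
  have hmem : ∀ x, x ∈ G.image (unliftV d) ↔ liftV d x ∈ G :=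
    fun x => mem_image_iff_of_inverse (unliftV_liftV x) (liftV_unliftV_eq_self_iff.2 hG)
  have horig : ∀ j ≤ d + 1, origV d j ∈ G.image (unliftV d) ↔ origV (d + 1) j ∈ G :=
    fun j hj => by rw [hmem, liftV_origV hj]
  have hnew : ∀ j ≤ d, newV d j ∈ G.image (unliftV d) ↔ newV (d + 1) j ∈ G :=
    fun j hj => by rw [hmem, liftV_newV hj]
  have hanti :
      (∀ j ≤ d, ¬ (origV d j ∈ G.image (unliftV d) ∧ newV d j ∈ G.image (unliftV d))) ↔
      ∀ j ≤ d + 1, ¬ (origV (d + 1) j ∈ G ∧ newV (d + 1) j ∈ G) := by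
    constructor
    · intro h j hj ⟨ho, hn⟩
      rcases hj.lt_or_eq with hj | rfl
      · exact h j (by omega) ⟨(horig j (by omega)).2 ho, (hnew j (by omega)).2 hn⟩
      · exact hG.2 hn
    · exact fun h j hj ⟨ho, hn⟩ =>
        h j (by omega) ⟨(horig j (by omega)).1 ho, (hnew j hj).1 hn⟩
  have hprefix : ∀ i ∈ I, (origV d i ∉ G.image (unliftV d) ∧
      ∀ j < i, newV d j ∉ G.image (unliftV d)) ↔
        (origV (d + 1) i ∉ G ∧ ∀ j < i, newV (d + 1) j ∉ G) := by
    intro i hi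
    have := hI i hi
    rw [horig i (by omega)]
    exact and_congr_right' (forall₂_congr fun j hj => by rw [hnew j (by omega)])
  rw [hanti, exists_congr fun i => and_congr_right (hprefix i), horig (d + 1) le_rfl]
  tauto

theorem mapC_liftV_diamU (hI : ∀ i ∈ I, i ≤ d) :
    mapC (liftV d) (DiamU d I) =
      {G ∈ DiamU (d + 1) I | origV (d + 1) (d + 1) ∉ G ∧ newV (d + 1) (d + 1) ∉ G} := by
  ext G
  rw [mem_mapC_iff_of_leftInvOn fun _ _ x _ => unliftV_liftV x, liftV_unliftV_eq_self_iff]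
  by_cases hG : origV (d + 1) (d + 2) ∉ G ∧ newV (d + 1) (d + 1) ∉ G
  · rw [image_unliftV_mem_diamU hI hG]
    simp only [Set.mem_ofPred_eq]
    tauto
  · have htop : ∀ F ∈ DiamU (d + 1) I, origV (d + 1) (d + 2) ∉ F :=
      fun F hF => ((diamU_eq fun i hi => (hI i hi).trans (by omega)).subset hF).2.1
    exact ⟨fun h => absurd h.2 hG, fun h => absurd ⟨htop G h.1, h.2.2⟩ hG⟩

end Lift

theorem diamU_eq_union {n : ℕ} {I : Finset ℕ} (hI : ∀ i ∈ I, i ≤ n + 1) :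
    DiamU n I = {G ∈ DiamU n I | newV n n ∉ G} ∪ {G ∈ DiamU n I | origV n n ∉ G} := by
  ext G
  refine ⟨fun hG => ?_, fun hG => hG.elim (·.1) (·.1)⟩
  have hanti := ((diamU_eq hI).subset hG).1 n le_rfl
  by_cases hn : newV n n ∈ G
  · exact Or.inr ⟨hG, fun ho => hanti ⟨ho, hn⟩⟩
  · exact Or.inl ⟨hG, hn⟩

/-- The paper's dimension `d` is `d + 1` here. -/
theorem stmt12 (d : ℕ) (I : Finset ℕ) (hI : ∀ i ∈ I, i ≤ d) :
    DiamU (d+1) I =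
        mapC (rhoV (d+1)) (DiamU (d+1) (I.image (· + 1))) ∪
          mapC (sigmaV (d+1)) (DiamU (d+1) (I.image (· + 1))) ∧
    mapC (rhoV (d+1)) (DiamU (d+1) (I.image (· + 1))) ∩
        mapC (sigmaV (d+1)) (DiamU (d+1) (I.image (· + 1))) =
      mapC (liftV d) (DiamU d I) ∧
    IsInduced (mapC (rhoV (d+1)) (DiamU (d+1) (I.image (· + 1)))) (DiamU (d+1) I) ∧
    IsInduced (mapC (sigmaV (d+1)) (DiamU (d+1) (I.image (· + 1)))) (DiamU (d+1) I) := by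
  have hI' : ∀ i ∈ I, i < d + 1 := fun i hi => Nat.lt_succ_of_le (hI i hi)
  rw [mapC_rhoV_diamU hI', mapC_sigmaV_diamU hI', mapC_liftV_diamU hI]
  refine ⟨diamU_eq_union fun i hi => (hI' i hi).le.trans (Nat.le_succ _), ?_,
    isInduced_sep_not_mem _ _, isInduced_sep_not_mem _ _⟩
  ext G
  simp only [Set.mem_inter_iff, Set.mem_ofPred_eq]
  tauto

end Paper
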